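/- arXiv:2404.18808 — 5 statements merged into one kernel-verified Lean document; each statement's English description precedes it below -/
import Mathlib

section
/- Let q ≡ 1 (mod 3) and m := (q-1)/3. The number of nonnegative integers not contained in the numerical semigroup H generated by {q, q+1} ∪ {(q-1) + j(q-2) : j = 0, …, m-1} is at most (q²-q)/6. -/
/-!
With `q = 3m + 1`, the generators `(q - 1) + j (q - 2) = (j + 1) q - (2j + 1)` together with `q`
and `q + 1` represent every `S q + a` with `a ≤ S`, and every `S q - D` with `1 ≤ D ≤ 2m` and
`D < 2S` (odd `D` by one generator, even `D` by two). Cutting `ℕ` into the blocks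
`(k (q + 1), (k + 1) (q + 1)]`, all gaps therefore lie in the intervals `(k (q + 1), (k + 1) (q - 2)]`
with `k < m`, of sizes `3 (m - 1 - k) + 2`, which add up to `m (3m + 1) / 2 = (q² - q) / 6`.
-/

open Finset

def semigroupH (q m : ℕ) : AddSubmonoid ℕ :=
  AddSubmonoid.closure
    (({q, q + 1} : Set ℕ) ∪ {x : ℕ | ∃ j : ℕ, j < m ∧ x = (q - 1) + j * (q - 2)})

def gapCover (q m : ℕ) : Finset ℕ :=
  (range m).biUnion fun k => Ioc (k * (q + 1)) ((k + 1) * (q - 2))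

theorem mul_add_mem_closure_pair (x : ℕ) {S a : ℕ} (ha : a ≤ S) :
    S * x + a ∈ AddSubmonoid.closure ({x, x + 1} : Set ℕ) := by
  have hx : x ∈ AddSubmonoid.closure ({x, x + 1} : Set ℕ) := AddSubmonoid.subset_closure (by simp)
  have hx1 : x + 1 ∈ AddSubmonoid.closure ({x, x + 1} : Set ℕ) :=
    AddSubmonoid.subset_closure (by simp)
  have h := add_mem (nsmul_mem hx (S - a)) (nsmul_mem hx1 a)
  rw [smul_eq_mul, smul_eq_mul] at h
  convert h using 1
  rw [mul_add, ← add_assoc, ← add_mul, Nat.sub_add_cancel ha, mul_one]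

namespace semigroupH

variable {q m : ℕ}

theorem mul_mem (r : ℕ) : r * q ∈ semigroupH q m := by
  have hq : q ∈ semigroupH q m := AddSubmonoid.subset_closure (Or.inl (by simp))
  simpa using nsmul_mem hq r

theorem generator_mem {j : ℕ} (hj : j < m) : (q - 1) + j * (q - 2) ∈ semigroupH q m :=
  AddSubmonoid.subset_closure (Or.inr ⟨j, hj, rfl⟩)

theorem mul_add_mem {S a : ℕ} (ha : a ≤ S) : S * q + a ∈ semigroupH q m :=
  AddSubmonoid.closure_mono Set.subset_union_left (mul_add_mem_closure_pair q ha)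

theorem mem_of_add_eq_mul {n D S : ℕ} (hq : 2 ≤ q) (hD : 1 ≤ D) (hDm : D ≤ 2 * m)
    (hDS : D < 2 * S) (h : n + D = S * q) : n ∈ semigroupH q m := by
  obtain ⟨p, rfl⟩ : ∃ p, q = p + 2 := ⟨q - 2, by omega⟩
  have hp₁ : p + 2 - 1 = p + 1 := rfl
  have hp₂ : p + 2 - 2 = p := rfl
  obtain ⟨j, rfl | rfl⟩ := Nat.even_or_odd' D
  · obtain ⟨i, rfl⟩ : ∃ i, j = i + 1 := ⟨j - 1, by omega⟩
    obtain ⟨r, rfl⟩ : ∃ r, S = i + 2 + r := ⟨S - (i + 2), by omega⟩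
    have hn : n = r * (p + 2) + ((p + 2 - 1) + i * (p + 2 - 2))
        + ((p + 2 - 1) + 0 * (p + 2 - 2)) := by
      rw [hp₁, hp₂]; linarith
    rw [hn]
    exact add_mem (add_mem (mul_mem r) (generator_mem (by omega))) (generator_mem (by omega))
  · obtain ⟨r, rfl⟩ : ∃ r, S = j + 1 + r := ⟨S - (j + 1), by omega⟩
    have hn : n = r * (p + 2) + ((p + 2 - 1) + j * (p + 2 - 2)) := by
      rw [hp₁, hp₂]; linarith
    rw [hn]
    exact add_mem (mul_mem r) (generator_mem (by omega))

end semigroupH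

theorem Nat.exists_mul_lt_le_succ_mul {n d : ℕ} (hn : 0 < n) (hd : 0 < d) :
    ∃ k, k * d < n ∧ n ≤ (k + 1) * d :=
  ⟨(n - 1) / d, by have := Nat.div_mul_le_self (n - 1) d; omega,
    by have := Nat.lt_mul_div_succ (n - 1) hd; rw [mul_comm]; omega⟩

theorem mem_semigroupH_of_not_mem_gapCover {q m n : ℕ} (hq : q = 3 * m + 1)
    (hn : n ∉ gapCover q m) : n ∈ semigroupH q m := by
  rcases Nat.eq_zero_or_pos n with rfl | hn0
  · exact zero_mem _
  obtain ⟨k, hk, hk'⟩ := Nat.exists_mul_lt_le_succ_mul hn0 (by omega : 0 < q + 1)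
  by_cases hle : (k + 1) * q ≤ n
  · obtain ⟨a, rfl⟩ := Nat.exists_eq_add_of_le hle
    exact semigroupH.mul_add_mem (by nlinarith)
  · have hgap : k < m → (k + 1) * (q - 2) < n := fun hkm => by
      by_contra h
      exact hn (mem_biUnion.2 ⟨k, mem_range.2 hkm, mem_Ioc.2 ⟨hk, not_lt.1 h⟩⟩)
    have hq₂ : k < m → (k + 1) * (q - 2) + (k + 1) * 2 = (k + 1) * q := fun hkm => by
      rw [← mul_add]; congr 1; omega
    subst hq
    have e₁ : k * (3 * m + 1 + 1) = 3 * (k * m) + 2 * k := by ring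
    have e₂ : (k + 1) * (3 * m + 1) = 3 * (k * m) + k + 3 * m + 1 := by ring
    have hD : (k + 1) * (3 * m + 1) - n ≤ 2 * m ∧ (k + 1) * (3 * m + 1) - n < 2 * (k + 1) := by
      rcases lt_or_ge k m with h | h
      · have := hgap h; have := hq₂ h; omega
      · omega
    exact semigroupH.mem_of_add_eq_mul (by omega) (by omega) hD.1 hD.2 (by omega)

theorem sum_range_three_mul_add_two (m : ℕ) :
    (∑ k ∈ range m, (3 * k + 2)) * 2 = m * (3 * m + 1) := by
  induction m with
  | zero => rfl
  | succ m ih => rw [sum_range_succ, add_mul, ih]; ring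

theorem card_Ioc_gapCover_block {m k : ℕ} (hk : k < m) :
    (Ioc (k * (3 * m + 1 + 1)) ((k + 1) * (3 * m + 1 - 2))).card = 3 * (m - 1 - k) + 2 := by
  obtain ⟨r, rfl⟩ : ∃ r, m = k + 1 + r := ⟨m - (k + 1), by omega⟩
  have h : (k + 1) * (3 * (k + 1 + r) + 1 - 2) = k * (3 * (k + 1 + r) + 1 + 1) + (3 * r + 2) := by
    rw [show 3 * (k + 1 + r) + 1 - 2 = 3 * k + 3 * r + 2 by omega]; ring
  rw [Nat.card_Ioc, h]
  omega

theorem card_gapCover_le {q m : ℕ} (hq : q = 3 * m + 1) :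
    (gapCover q m).card ≤ (q ^ 2 - q) / 6 := by
  subst hq
  have hq₂ : (3 * m + 1) ^ 2 - (3 * m + 1) = 6 * ∑ k ∈ range m, (3 * k + 2) := by
    have := sum_range_three_mul_add_two m
    rw [Nat.sub_eq_of_eq_add]; nlinarith
  calc (gapCover (3 * m + 1) m).card
      ≤ ∑ k ∈ range m, (Ioc (k * (3 * m + 1 + 1)) ((k + 1) * (3 * m + 1 - 2))).card :=
        card_biUnion_le
    _ = ∑ k ∈ range m, (3 * (m - 1 - k) + 2) :=
        sum_congr rfl fun k hk => card_Ioc_gapCover_block (mem_range.1 hk)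
    _ = ∑ k ∈ range m, (3 * k + 2) := sum_range_reflect (fun k => 3 * k + 2) m
    _ = ((3 * m + 1) ^ 2 - (3 * m + 1)) / 6 := by rw [hq₂, Nat.mul_div_cancel_left _ (by norm_num)]

theorem ncard_not_mem_semigroupH_le {q m : ℕ} (hq : q = 3 * m + 1) :
    {n : ℕ | n ∉ semigroupH q m}.ncard ≤ (q ^ 2 - q) / 6 := by
  have hsub : {n : ℕ | n ∉ semigroupH q m} ⊆ gapCover q m := fun n hn => by
    by_contra h
    exact hn (mem_semigroupH_of_not_mem_gapCover hq h)
  calc {n : ℕ | n ∉ semigroupH q m}.ncard ≤ (gapCover q m : Set ℕ).ncard :=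
        Set.ncard_le_ncard hsub (finite_toSet _)
    _ = (gapCover q m).card := Set.ncard_coe_finset _
    _ ≤ (q ^ 2 - q) / 6 := card_gapCover_le hq

theorem stmt2_general (q : ℕ) (hmod : q % 3 = 1) :
    {n : ℕ | n ∉ AddSubmonoid.closure
        (({q, q + 1} : Set ℕ) ∪ {x : ℕ | ∃ j : ℕ, j < (q - 1) / 3 ∧ x = (q - 1) + j * (q - 2)})}.ncard
      ≤ (q ^ 2 - q) / 6 :=
  ncard_not_mem_semigroupH_le (by omega)

theorem stmt2 (q : ℕ) (hq : ∃ p n : ℕ, Nat.Prime p ∧ 0 < n ∧ q = p ^ n)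
    (hmod : q % 3 = 1) (h4 : 4 ≤ q) :
    {n : ℕ | n ∉ AddSubmonoid.closure
        (({q, q + 1} : Set ℕ) ∪ {x : ℕ | ∃ j : ℕ, j < (q - 1) / 3 ∧ x = (q - 1) + j * (q - 2)})}.ncard
      ≤ (q ^ 2 - q) / 6 :=
  stmt2_general q hmod
end

section
/- Let F be a field of characteristic different from 3 containing a primitive cube root of unity ζ₃, and for i ∈ ℤ define the rational functions P_i(s) = ((s+ζ₃)^{3i} - (s+ζ₃²)^{3i}) / (3(ζ₃-ζ₃²) s (s-1)) over F. Then for all integers i, j, ℓ: P_i(s)·P_{ℓ+j}(s) − P_j(s)·P_{ℓ+i}(s) = (s²−s+1)^{3j}·P_{i−j}(s)·P_ℓ(s), as identities of rational functions in F(s). -/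
/-!
With `a = (s + ζ)³`, `b = (s + ζ²)³` and `D = 3(ζ - ζ²)s(s - 1)` we have `P_i = (aⁱ - bⁱ) / D`,
and `ab = (s² - s + 1)³` because `ζ + ζ² = -1` and `ζ³ = 1`. The claim is then the
d'Ocagne-type identity for the Lucas sequence `aⁿ - bⁿ`, which is a polynomial identity in
`a, b, a⁻¹, b⁻¹`.
-/

theorem zpow_sub_zpow_cross_identity {K : Type*} [Field K] {a b : K} (ha : a ≠ 0) (hb : b ≠ 0)
    (m n k : ℤ) :
    (a ^ m - b ^ m) * (a ^ (k + n) - b ^ (k + n)) - (a ^ n - b ^ n) * (a ^ (k + m) - b ^ (k + m)) =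
      (a * b) ^ n * (a ^ (m - n) - b ^ (m - n)) * (a ^ k - b ^ k) := by
  simp only [zpow_add₀ ha, zpow_add₀ hb, zpow_sub₀ ha, zpow_sub₀ hb, mul_zpow]
  field_simp
  ring

-- `D` is arbitrary: for `D = 0` both sides are `0`.
theorem div_zpow_sub_zpow_cross_identity {K : Type*} [Field K] {a b : K} (ha : a ≠ 0) (hb : b ≠ 0)
    (D : K) (m n k : ℤ) :
    (a ^ m - b ^ m) / D * ((a ^ (k + n) - b ^ (k + n)) / D) -
        (a ^ n - b ^ n) / D * ((a ^ (k + m) - b ^ (k + m)) / D) =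
      (a * b) ^ n * ((a ^ (m - n) - b ^ (m - n)) / D) * ((a ^ k - b ^ k) / D) := by
  simp only [div_eq_mul_inv]
  linear_combination D⁻¹ ^ 2 * zpow_sub_zpow_cross_identity ha hb m n k

theorem IsPrimitiveRoot.add_mul_add_sq_eq_sq_sub_add_one {F R : Type*} [Field F] [CommRing R] (f : F →+* R)
    {ζ : F} (hζ : IsPrimitiveRoot ζ 3) (x : R) :
    (x + f ζ) * (x + f (ζ ^ 2)) = x ^ 2 - x + 1 := by
  have hsum : ∑ i ∈ Finset.range 3, ζ ^ i = 0 := hζ.geom_sum_eq_zero (by norm_num)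
  simp only [Finset.sum_range_succ, Finset.sum_range_zero] at hsum
  have hcube : ζ ^ 3 = 1 := hζ.pow_eq_one
  have h1 : f ζ * f (ζ ^ 2) = 1 := by rw [← map_mul, ← pow_succ', hcube, map_one]
  have h2 : f ζ + f (ζ ^ 2) = -1 := by
    rw [← map_add, show ζ + ζ ^ 2 = -1 by linear_combination hsum, map_neg, map_one]
  linear_combination x * h2 + h1

theorem RatFunc.X_add_C_ne_zero {F : Type*} [Field F] (c : F) : RatFunc.X + RatFunc.C c ≠ 0 := by
  rw [← RatFunc.algebraMap_X, ← RatFunc.algebraMap_C, ← map_add]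
  exact RatFunc.algebraMap_ne_zero (Polynomial.X_add_C_ne_zero c)

theorem stmt5_general (F : Type*) [Field F]
    (ζ : F) (hζ : IsPrimitiveRoot ζ 3)
    (P : ℤ → RatFunc F)
    (hP : ∀ i : ℤ, P i =
      ((RatFunc.X + RatFunc.C ζ) ^ (3 * i) - (RatFunc.X + RatFunc.C (ζ ^ 2)) ^ (3 * i)) /
        (3 * (RatFunc.C ζ - RatFunc.C (ζ ^ 2)) * RatFunc.X * (RatFunc.X - 1)))
    (i j ℓ : ℤ) :
    P i * P (ℓ + j) - P j * P (ℓ + i) =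
      (RatFunc.X ^ 2 - RatFunc.X + 1) ^ (3 * j) * P (i - j) * P ℓ := by
  have hne (c : F) : (RatFunc.X + RatFunc.C c) ^ (3 : ℤ) ≠ 0 :=
    zpow_ne_zero _ (RatFunc.X_add_C_ne_zero c)
  simp only [hP, zpow_mul]
  rw [← hζ.add_mul_add_sq_eq_sq_sub_add_one RatFunc.C, mul_zpow]
  exact div_zpow_sub_zpow_cross_identity (hne ζ) (hne (ζ ^ 2)) _ i j ℓ

theorem stmt5 (F : Type*) [Field F] (h3 : ringChar F ≠ 3)
    (ζ : F) (hζ : IsPrimitiveRoot ζ 3)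
    (P : ℤ → RatFunc F)
    (hP : ∀ i : ℤ, P i =
      ((RatFunc.X + RatFunc.C ζ) ^ (3 * i) - (RatFunc.X + RatFunc.C (ζ ^ 2)) ^ (3 * i)) /
        (3 * (RatFunc.C ζ - RatFunc.C (ζ ^ 2)) * RatFunc.X * (RatFunc.X - 1)))
    (i j ℓ : ℤ) :
    P i * P (ℓ + j) - P j * P (ℓ + i) =
      (RatFunc.X ^ 2 - RatFunc.X + 1) ^ (3 * j) * P (i - j) * P ℓ :=
  stmt5_general F ζ hζ P hP i j ℓ
end

section
/- Let F be a field of characteristic different from 3 containing a primitive cube root of unity ζ₃. For a positive integer i, the rational function P_i(s) = ((s+ζ₃)^{3i} - (s+ζ₃²)^{3i})/(3(ζ₃-ζ₃²)s(s-1)) is a nonzero polynomial of degree at most 3i−3, and Q_i(s) = (((1-ζ₃)/3)(s+ζ₃)^{3i-1} + ((1-ζ₃²)/3)(s+ζ₃²)^{3i-1})/(s-1) is a nonzero polynomial of degree exactly 3i−2. -/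
/-!
Since `1 + ζ = -ζ²` and `1 + ζ² = -ζ` are cube roots of `-1`, the polynomials
`(X + ζ)ⁿ` and `(X + ζ²)ⁿ` take values that agree at `0` and `1` when `3 ∣ n`; their difference
also loses its leading term, and it is nonzero since only one of them vanishes at `-ζ`. Hence
`X (X - 1)` divides it with a nonzero quotient of degree at most `3i - 3`. For `n = 3i - 1` the
weights `(1 - ζ)/3` and `(1 - ζ²)/3` add up to `1`, so the numerator of `Q_i` has degree exactly
`n`, and the same cube-root identities make it vanish at `1`.
-/

open Polynomial

section Polynomial

variable {R : Type*} [CommRing R]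

theorem degree_X_add_C_pow_sub_X_add_C_pow_lt [Nontrivial R] (a b : R) {n : ℕ} :
    ((X + C a) ^ n - (X + C b) ^ n).degree < (n : WithBot ℕ) := by
  have ha : ((X + C a) ^ n).Monic := (monic_X_add_C a).pow n
  have hb : ((X + C b) ^ n).Monic := (monic_X_add_C b).pow n
  have hd : ((X + C a) ^ n).degree = (n : WithBot ℕ) := by
    rw [degree_eq_natDegree ha.ne_zero, natDegree_pow_X_add_C]
  refine hd ▸ degree_sub_lt_left ?_ ha.ne_zero (by rw [ha.leadingCoeff, hb.leadingCoeff])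
  rw [hd, degree_eq_natDegree hb.ne_zero, natDegree_pow_X_add_C]

theorem natDegree_C_mul_X_add_C_pow_add_C_mul_X_add_C_pow {a b : R} (hab : a + b ≠ 0)
    (u v : R) (n : ℕ) : (C a * (X + C u) ^ n + C b * (X + C v) ^ n).natDegree = n := by
  have : Nontrivial R := nontrivial_of_ne _ _ hab
  refine natDegree_eq_of_le_of_coeff_ne_zero ?_
    (by simpa [coeff_C_mul, coeff_X_add_C_pow] using hab)
  refine natDegree_add_le_of_degree_le ?_ ?_ <;>
    exact natDegree_C_mul_le _ _ |>.trans (natDegree_pow_X_add_C _ _).le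

end Polynomial

theorem RatFunc.algebraMap_eq_div_of_mul_eq {K : Type*} [Field K] {p q r : K[X]} (hq : q ≠ 0)
    (h : p * q = r) :
    algebraMap K[X] (RatFunc K) p =
      algebraMap K[X] (RatFunc K) r / algebraMap K[X] (RatFunc K) q := by
  rw [eq_div_iff (RatFunc.algebraMap_ne_zero hq), ← map_mul, h]

namespace IsPrimitiveRoot

variable {K : Type*} [Field K] {ζ : K} (hζ : IsPrimitiveRoot ζ 3)
include hζ

theorem sq_add_self_add_one : ζ ^ 2 + ζ + 1 = 0 := by
  have h := hζ.geom_sum_eq_zero (by norm_num)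
  simp only [Finset.sum_range_succ, Finset.sum_range_zero] at h
  linear_combination h

theorem three_ne_zero : (3 : K) ≠ 0 := by
  have := hζ.neZero'
  exact_mod_cast this.ne

theorem one_add_eq_neg_sq : 1 + ζ = -ζ ^ 2 := by
  linear_combination hζ.sq_add_self_add_one

theorem one_add_sq_eq_neg : 1 + ζ ^ 2 = -ζ := by
  linear_combination hζ.sq_add_self_add_one

theorem sq_ne_self : ζ ^ 2 ≠ ζ := by
  rw [sq, Ne, mul_eq_right₀ (hζ.ne_zero (by norm_num))]
  exact hζ.ne_one (by norm_num)

theorem neg_pow_three : (-ζ) ^ 3 = -1 := by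
  rw [neg_pow, hζ.pow_eq_one]; norm_num

theorem neg_sq_pow_three : (-ζ ^ 2) ^ 3 = -1 := by
  rw [neg_pow, pow_right_comm, hζ.pow_eq_one]; norm_num

theorem three_mul_sub_sq_ne_zero : 3 * (ζ - ζ ^ 2) ≠ 0 :=
  mul_ne_zero hζ.three_ne_zero (sub_ne_zero.mpr hζ.sq_ne_self.symm)

end IsPrimitiveRoot

section CubeRoot

variable {K : Type*} [Field K] {ζ : K}

/-- `numeratorP ζ (3 * i)` and `numeratorQ ζ (3 * i - 1)` are the numerators of `P_i` and `Q_i`. -/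
noncomputable def numeratorP (ζ : K) (n : ℕ) : K[X] :=
  (X + C ζ) ^ n - (X + C (ζ ^ 2)) ^ n

noncomputable def numeratorQ (ζ : K) (n : ℕ) : K[X] :=
  C ((1 - ζ) / 3) * (X + C ζ) ^ n + C ((1 - ζ ^ 2) / 3) * (X + C (ζ ^ 2)) ^ n

theorem numeratorP_ne_zero (hζ : IsPrimitiveRoot ζ 3) {n : ℕ} (hn : n ≠ 0) :
    numeratorP ζ n ≠ 0 := by
  intro h
  have h' := congrArg (eval (-ζ)) h
  simp only [numeratorP, eval_sub, eval_pow, eval_add, eval_X, eval_C, neg_add_cancel,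
    zero_pow hn, zero_sub, eval_zero, neg_eq_zero, neg_add_eq_sub] at h'
  exact pow_ne_zero n (sub_ne_zero.mpr hζ.sq_ne_self) h'

theorem X_mul_X_sub_one_dvd_numeratorP (hζ : IsPrimitiveRoot ζ 3) (k : ℕ) :
    X * (X - 1) ∣ numeratorP ζ (3 * k) := by
  have h0 : (numeratorP ζ (3 * k)).IsRoot 0 := by
    simp [numeratorP, pow_mul, pow_right_comm _ 2 3, hζ.pow_eq_one]
  have h1 : (numeratorP ζ (3 * k)).IsRoot 1 := by
    simp only [numeratorP, IsRoot.def, eval_sub, eval_pow, eval_add, eval_X, eval_C,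
      hζ.one_add_eq_neg_sq, hζ.one_add_sq_eq_neg, pow_mul, hζ.neg_pow_three,
      hζ.neg_sq_pow_three, sub_self]
  have hcop : IsCoprime (X : K[X]) (X - 1) := by
    simpa using isCoprime_X_sub_C_of_isUnit_sub (R := K) (a := 0) (b := 1) (by simp)
  exact hcop.mul_dvd (by simpa using dvd_iff_isRoot.mpr h0)
    (by simpa using dvd_iff_isRoot.mpr h1)

theorem exists_mul_eq_numeratorP (hζ : IsPrimitiveRoot ζ 3) {k : ℕ} (hk : k ≠ 0) :
    ∃ p : K[X], p ≠ 0 ∧ p.natDegree ≤ 3 * k - 3 ∧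
      p * (C (3 * (ζ - ζ ^ 2)) * (X * (X - 1))) = numeratorP ζ (3 * k) := by
  have hc := hζ.three_mul_sub_sq_ne_zero
  obtain ⟨p, hp⟩ := X_mul_X_sub_one_dvd_numeratorP hζ k
  have hp0 : p ≠ 0 := by
    rintro rfl
    exact numeratorP_ne_zero hζ (n := 3 * k) (by omega) (by simpa using hp)
  have hdeg : p.natDegree + 2 < 3 * k := by
    have hlt := (natDegree_lt_iff_degree_lt (numeratorP_ne_zero hζ (by omega))).mpr
      (degree_X_add_C_pow_sub_X_add_C_pow_lt ζ (ζ ^ 2) (n := 3 * k))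
    rwa [hp, ← C_1, natDegree_mul (mul_ne_zero X_ne_zero (X_sub_C_ne_zero 1)) hp0,
      natDegree_mul X_ne_zero (X_sub_C_ne_zero 1), natDegree_X, natDegree_X_sub_C,
      add_comm] at hlt
  refine ⟨C (3 * (ζ - ζ ^ 2))⁻¹ * p, mul_ne_zero (C_ne_zero.mpr (inv_ne_zero hc)) hp0, ?_, ?_⟩
  · rw [natDegree_C_mul (inv_ne_zero hc)]
    omega
  · rw [hp, mul_mul_mul_comm, ← C_mul, inv_mul_cancel₀ hc, C_1, one_mul, mul_comm]

theorem numeratorQ_isRoot_one (hζ : IsPrimitiveRoot ζ 3) (k : ℕ) :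
    (numeratorQ ζ (3 * k + 2)).IsRoot 1 := by
  simp only [numeratorQ, IsRoot.def, eval_add, eval_mul, eval_pow, eval_X, eval_C,
    hζ.one_add_eq_neg_sq, hζ.one_add_sq_eq_neg, pow_add, pow_mul, hζ.neg_pow_three,
    hζ.neg_sq_pow_three]
  linear_combination ((-1) ^ k / 3 * -ζ ^ 2) * hζ.pow_eq_one

theorem natDegree_numeratorQ (hζ : IsPrimitiveRoot ζ 3) (n : ℕ) :
    (numeratorQ ζ n).natDegree = n := by
  refine natDegree_C_mul_X_add_C_pow_add_C_mul_X_add_C_pow ?_ _ _ n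
  have hsum : (1 - ζ) / 3 + (1 - ζ ^ 2) / 3 = 1 := by
    field_simp [hζ.three_ne_zero]
    linear_combination -hζ.sq_add_self_add_one
  rw [hsum]
  exact one_ne_zero

theorem exists_mul_eq_numeratorQ (hζ : IsPrimitiveRoot ζ 3) (k : ℕ) :
    ∃ Q : K[X], Q ≠ 0 ∧ Q.natDegree = 3 * k + 1 ∧ Q * (X - 1) = numeratorQ ζ (3 * k + 2) := by
  obtain ⟨Q, hQ⟩ := dvd_iff_isRoot.mpr (numeratorQ_isRoot_one hζ k)
  have hdeg := natDegree_numeratorQ hζ (3 * k + 2)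
  rw [hQ] at hdeg
  have hQ0 : Q ≠ 0 := by
    rintro rfl
    simp at hdeg
  refine ⟨Q, hQ0, ?_, by rw [hQ, C_1, mul_comm]⟩
  rw [natDegree_mul (X_sub_C_ne_zero 1) hQ0, natDegree_X_sub_C] at hdeg
  omega

end CubeRoot

theorem stmt7_general (F : Type*) [Field F]
    (ζ : F) (hζ : IsPrimitiveRoot ζ 3) (i : ℕ) (hi : 1 ≤ i) :
    (∃ p : Polynomial F, p ≠ 0 ∧ p.degree ≤ (3 * i - 3 : ℕ) ∧
      algebraMap (Polynomial F) (RatFunc F) p =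
        ((RatFunc.X + RatFunc.C ζ) ^ (3 * i) - (RatFunc.X + RatFunc.C (ζ ^ 2)) ^ (3 * i)) /
          (3 * (RatFunc.C ζ - RatFunc.C (ζ ^ 2)) * RatFunc.X * (RatFunc.X - 1))) ∧
    (∃ Q : Polynomial F, Q ≠ 0 ∧ Q.degree = (3 * i - 2 : ℕ) ∧
      algebraMap (Polynomial F) (RatFunc F) Q =
        (RatFunc.C ((1 - ζ) / 3) * (RatFunc.X + RatFunc.C ζ) ^ (3 * i - 1) +
          RatFunc.C ((1 - ζ ^ 2) / 3) * (RatFunc.X + RatFunc.C (ζ ^ 2)) ^ (3 * i - 1)) /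
          (RatFunc.X - 1)) := by
  obtain ⟨j, rfl⟩ : ∃ j, i = j + 1 := ⟨i - 1, by omega⟩
  obtain ⟨p, hp0, hpdeg, hp⟩ := exists_mul_eq_numeratorP hζ j.succ_ne_zero
  obtain ⟨Q, hQ0, hQdeg, hQ⟩ := exists_mul_eq_numeratorQ hζ j
  have hQdeg' : Q.degree = (3 * (j + 1) - 2 : ℕ) := by
    rw [degree_eq_natDegree hQ0, hQdeg, show 3 * (j + 1) - 2 = 3 * j + 1 by omega]
  refine ⟨⟨p, hp0, degree_le_of_natDegree_le hpdeg, ?_⟩, ⟨Q, hQ0, hQdeg', ?_⟩⟩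
  · rw [RatFunc.algebraMap_eq_div_of_mul_eq (mul_ne_zero (C_ne_zero.mpr hζ.three_mul_sub_sq_ne_zero)
      (mul_ne_zero X_ne_zero (X_sub_C_ne_zero 1))) hp]
    simp [numeratorP, RatFunc.algebraMap_C, RatFunc.algebraMap_X, map_ofNat, mul_assoc]
  · rw [RatFunc.algebraMap_eq_div_of_mul_eq (X_sub_C_ne_zero 1) hQ,
      show 3 * (j + 1) - 1 = 3 * j + 2 by omega]
    simp [numeratorQ, RatFunc.algebraMap_C, RatFunc.algebraMap_X]

theorem stmt7 (F : Type*) [Field F] (h3 : ringChar F ≠ 3)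
    (ζ : F) (hζ : IsPrimitiveRoot ζ 3) (i : ℕ) (hi : 1 ≤ i) :
    (∃ p : Polynomial F, p ≠ 0 ∧ p.degree ≤ (3 * i - 3 : ℕ) ∧
      algebraMap (Polynomial F) (RatFunc F) p =
        ((RatFunc.X + RatFunc.C ζ) ^ (3 * i) - (RatFunc.X + RatFunc.C (ζ ^ 2)) ^ (3 * i)) /
          (3 * (RatFunc.C ζ - RatFunc.C (ζ ^ 2)) * RatFunc.X * (RatFunc.X - 1))) ∧
    (∃ Q : Polynomial F, Q ≠ 0 ∧ Q.degree = (3 * i - 2 : ℕ) ∧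
      algebraMap (Polynomial F) (RatFunc F) Q =
        (RatFunc.C ((1 - ζ) / 3) * (RatFunc.X + RatFunc.C ζ) ^ (3 * i - 1) +
          RatFunc.C ((1 - ζ ^ 2) / 3) * (RatFunc.X + RatFunc.C (ζ ^ 2)) ^ (3 * i - 1)) /
          (RatFunc.X - 1)) :=
  stmt7_general F ζ hζ i hi
end

section
/- Let q be a prime power with q ≡ 1 (mod 3), and let α ∈ 𝔽_{q²} satisfy α ∉ {0,1} and α^q − α^{q−1} = 1 and α² − α + 1 ≠ 0. Let ζ₃ ∈ 𝔽_{q²} be a primitive cube root of unity. Then ((α+ζ₃)/(α+ζ₃²))^{q+1} = ζ₃. -/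
/-!
Raising to the `q`-th power is a field automorphism of `F` that fixes `ζ` (as `q ≡ 1 mod 3`) and,
by the hypothesis on `α`, sends `α` to `α / (α - 1)`. Since `(α + ζ)(α + ζ²) = α² - α + 1`, both
`α + ζ` and `α + ζ²` are nonzero, and using `ζ² + ζ + 1 = 0` the image
`(α / (α - 1) + ζ) / (α / (α - 1) + ζ²)` simplifies to `(ζ α + 1) / (α + ζ)`. Multiplying by
`(α + ζ) / (α + ζ²)` leaves `(ζ α + 1) / (α + ζ²) = ζ`.
-/

lemma pow_eq_self_of_pow_eq_one_of_mod_eq_one {M : Type*} [Monoid M] {x : M} {k q : ℕ}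
    (hx : x ^ k = 1) (hq : q % k = 1) : x ^ q = x := by
  rw [pow_eq_pow_mod q hx, hq, pow_one]

lemma IsPrimitiveRoot.sq_add_self_add_one_s10 {R : Type*} [CommRing R] [IsDomain R] {ζ : R}
    (hζ : IsPrimitiveRoot ζ 3) : ζ ^ 2 + ζ + 1 = 0 := by
  have h := hζ.geom_sum_eq_zero (by norm_num)
  simp only [Finset.sum_range_succ, Finset.sum_range_zero, pow_zero, pow_one] at h
  linear_combination h

lemma pow_eq_div_sub_one_of_pow_sub_pow_pred {K : Type*} [Field K] {α : K} {q : ℕ} (hq : 0 < q)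
    (h1 : α ≠ 1) (hα : α ^ q - α ^ (q - 1) = 1) : α ^ q = α / (α - 1) := by
  have hsucc : α ^ q = α ^ (q - 1) * α := by rw [← pow_succ, Nat.sub_add_cancel hq]
  rw [eq_div_iff (sub_ne_zero.mpr h1)]
  linear_combination α * hα - hsucc

lemma div_add_cube_root_pow_char_pow {K : Type*} [Field K] (p n : ℕ) [ExpChar K p]
    {ζ : K} (hζ : ζ ^ p ^ n = ζ) (x : K) :
    ((x + ζ) / (x + ζ ^ 2)) ^ p ^ n = (x ^ p ^ n + ζ) / (x ^ p ^ n + ζ ^ 2) := by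
  have h := map_div₀ (iterateFrobenius K p n) (x + ζ) (x + ζ ^ 2)
  rw [map_add, map_add, map_pow] at h
  simpa only [iterateFrobenius_def, hζ] using h

lemma div_add_cube_root_mul_at_div_sub_one_eq {K : Type*} [Field K] {ζ α : K}
    (hζ : ζ ^ 2 + ζ + 1 = 0) (h1 : α ≠ 1) (h2 : α ^ 2 - α + 1 ≠ 0) :
    (α + ζ) / (α + ζ ^ 2) * ((α / (α - 1) + ζ) / (α / (α - 1) + ζ ^ 2)) = ζ := by
  have hfactor : (α + ζ) * (α + ζ ^ 2) = α ^ 2 - α + 1 := by linear_combination (α + ζ - 1) * hζ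
  obtain ⟨hαζ, hαζ₂⟩ := mul_ne_zero_iff.mp (hfactor ▸ h2)
  have hα1 : α - 1 ≠ 0 := sub_ne_zero.mpr h1
  have hζ0 : ζ ≠ 0 := by rintro rfl; simp at hζ
  have hnum : α / (α - 1) + ζ = -ζ * (ζ * α + 1) / (α - 1) := by
    field_simp
    linear_combination α * hζ
  have hden : α / (α - 1) + ζ ^ 2 = -ζ * (α + ζ) / (α - 1) := by
    field_simp
    linear_combination α * hζ
  rw [hnum, hden, div_div_div_cancel_right₀ hα1, mul_div_mul_left _ _ (neg_ne_zero.mpr hζ0)]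
  field_simp
  linear_combination (1 - ζ) * hζ

theorem stmt10_general (q : ℕ) (hq : ∃ p n : ℕ, Nat.Prime p ∧ 0 < n ∧ q = p ^ n)
    (hmod : q % 3 = 1)
    (F : Type*) [Field F] [Fintype F] (hcard : Fintype.card F = q ^ 2)
    (ζ α : F) (hζ : IsPrimitiveRoot ζ 3)
    (h1 : α ≠ 1) (h2 : α ^ 2 - α + 1 ≠ 0)
    (hα : α ^ q - α ^ (q - 1) = 1) :
    ((α + ζ) / (α + ζ ^ 2)) ^ (q + 1) = ζ := by
  obtain ⟨p, n, hp, -, rfl⟩ := hq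
  have : Fact p.Prime := ⟨hp⟩
  have : CharP F p := charP_of_card_eq_prime_pow (by rw [hcard, ← pow_mul])
  have hζq : ζ ^ p ^ n = ζ := pow_eq_self_of_pow_eq_one_of_mod_eq_one hζ.pow_eq_one hmod
  have hαq : α ^ p ^ n = α / (α - 1) :=
    pow_eq_div_sub_one_of_pow_sub_pow_pred (pow_pos hp.pos n) h1 hα
  rw [pow_succ', div_add_cube_root_pow_char_pow p n hζq, hαq]
  exact div_add_cube_root_mul_at_div_sub_one_eq hζ.sq_add_self_add_one_s10 h1 h2

theorem stmt10 (q : ℕ) (hq : ∃ p n : ℕ, Nat.Prime p ∧ 0 < n ∧ q = p ^ n)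
    (hmod : q % 3 = 1)
    (F : Type*) [Field F] [Fintype F] (hcard : Fintype.card F = q ^ 2)
    (ζ α : F) (hζ : IsPrimitiveRoot ζ 3)
    (h0 : α ≠ 0) (h1 : α ≠ 1) (h2 : α ^ 2 - α + 1 ≠ 0)
    (hα : α ^ q - α ^ (q - 1) = 1) :
    ((α + ζ) / (α + ζ ^ 2)) ^ (q + 1) = ζ :=
  stmt10_general q hq hmod F hcard ζ α hζ h1 h2 hα
end

section
/- Let q be a prime power with q ≡ 1 (mod 3) and let α be an element of a field of characteristic p = char 𝔽_q, with α ∉ {0,1}. If α^q = α/(α−1), then ((α+ζ₃)/(α+ζ₃²))^q = ζ₃·(α+ζ₃²)/(α+ζ₃), where ζ₃ is a primitive cube root of unity with ζ₃^q = ζ₃ and α²−α+1 ≠ 0. -/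
/-!
Frobenius fixes `ζ` and `ζ²`, so `(α + ω)^q = α/(α - 1) + ω` for `ω ∈ {ζ, ζ²}`. For a primitive
cube root of unity `ω` one has `1 + ω = -ω²`, whence `x/(x - 1) + ω = -ω² (x + ω²)/(x - 1)`.
Applying this to `ω = ζ` and to `ω = ζ²` (with `(ζ²)² = ζ`) and dividing gives the claim.
-/

namespace IsPrimitiveRoot

variable {K : Type*} [Field K] {ω : K}

lemma sq_add_self_add_one_s11 (hω : IsPrimitiveRoot ω 3) : ω ^ 2 + ω + 1 = 0 := by
  have h := hω.geom_sum_eq_zero (by norm_num)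
  simp only [Finset.sum_range_succ, Finset.sum_range_zero, pow_zero, pow_one, zero_add] at h
  linear_combination h

lemma div_sub_one_add (hω : IsPrimitiveRoot ω 3) {x : K} (hx : x ≠ 1) :
    x / (x - 1) + ω = -ω ^ 2 * (x + ω ^ 2) / (x - 1) := by
  have hx1 : x - 1 ≠ 0 := sub_ne_zero.mpr hx
  field_simp
  linear_combination x * hω.sq_add_self_add_one_s11 + ω * hω.pow_eq_one

end IsPrimitiveRoot

theorem stmt11_general (p n q : ℕ) (hp : Nat.Prime p) (hq : q = p ^ n)
    (K : Type*) [Field K] [CharP K p]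
    (ζ α : K) (hζ : IsPrimitiveRoot ζ 3) (hζq : ζ ^ q = ζ)
    (h1 : α ≠ 1)
    (hα : α ^ q = α / (α - 1)) :
    ((α + ζ) / (α + ζ ^ 2)) ^ q = ζ * (α + ζ ^ 2) / (α + ζ) := by
  have := Fact.mk hp
  subst hq
  have hζ0 : ζ ≠ 0 := hζ.ne_zero (by norm_num)
  have hζ4 : (ζ ^ 2) ^ 2 = ζ := by
    rw [← pow_mul, show 2 * 2 = 3 + 1 by rfl, pow_succ, hζ.pow_eq_one, one_mul]
  have hfrob : ((α + ζ) / (α + ζ ^ 2)) ^ p ^ n = (α / (α - 1) + ζ) / (α / (α - 1) + ζ ^ 2) := by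
    rw [div_pow, add_pow_char_pow, add_pow_char_pow, hα, hζq, ← pow_mul, mul_comm, pow_mul, hζq]
  rw [hfrob, hζ.div_sub_one_add h1, (hζ.pow_of_coprime 2 (by norm_num)).div_sub_one_add h1, hζ4,
    div_div_div_cancel_right₀ (sub_ne_zero.mpr h1), neg_mul, neg_mul, neg_div_neg_eq,
    pow_two, mul_assoc, mul_div_mul_left _ _ hζ0]

theorem stmt11 (p n q : ℕ) (hp : Nat.Prime p) (hn : 0 < n) (hq : q = p ^ n)
    (hmod : q % 3 = 1)
    (K : Type*) [Field K] [CharP K p]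
    (ζ α : K) (hζ : IsPrimitiveRoot ζ 3) (hζq : ζ ^ q = ζ)
    (h0 : α ≠ 0) (h1 : α ≠ 1) (h2 : α ^ 2 - α + 1 ≠ 0)
    (hα : α ^ q = α / (α - 1)) :
    ((α + ζ) / (α + ζ ^ 2)) ^ q = ζ * (α + ζ ^ 2) / (α + ζ) :=
  stmt11_general p n q hp hq K ζ α hζ hζq h1 hα
end
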